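/- Let 1 < p < N be real numbers, set κ := (N − p)/(p − 1) > 0, let F be a norm on ℝ^N with dual norm F°, and define u(x) := F°(x)^{−κ} for x ≠ 0. Then at every point x ∈ ℝ^N \ {0} where F° is (Fréchet) differentiable: (i) u is differentiable at x with ∇u(x) = −κ F°(x)^{−κ−1} ∇F°(x); (ii) F(∇u(x)) = κ F°(x)^{−(N−1)/(p−1)}; (iii) the vector −x/F°(x) is a subgradient of F at ∇u(x); and (iv) F(∇u(x))^{p−1} · (−x/F°(x)) = −κ^{p−1} F°(x)^{−N} · x, i.e. the flux field F^{p−1}(∇u) ∂F(∇u) coincides with the divergence-free field −κ^{p−1} F°(y)^{−N} y. -/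

import Mathlib

open scoped RealInnerProductSpace

/-- The dual (polar) norm `F°(ξ) = sup { ξ · y : F(y) ≤ 1 }` of `F`. -/
noncomputable def polar {N : ℕ} (F : EuclideanSpace ℝ (Fin N) → ℝ)
    (ξ : EuclideanSpace ℝ (Fin N)) : ℝ :=
  sSup ((fun y => (inner ℝ ξ y : ℝ)) '' {y | F y ≤ 1})

/-!
Where `F°` is differentiable at `x ≠ 0`, its gradient `z` satisfies `⟪z, v⟫ ≤ F°(v)` for all `v`,
by convexity of the norm `F°`, with equality at `v = x` by homogeneity. The bipolar theorem turns
the first fact into `F(z) ≤ 1`, and the generalized Cauchy–Schwarz inequality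
`F°(x) = ⟪x, z⟫ ≤ F°(x) F(z)` into `F(z) ≥ 1`. The chain rule gives
`∇u(x) = -κ F°(x)^(-κ-1) z`, so `F(∇u(x)) = κ F°(x)^(-κ-1)`, and `-x / F°(x)` is a vector of dual
norm one pairing with `∇u(x)` to `F(∇u(x))`, which is exactly what makes it a subgradient.
The flux identity is exponent arithmetic with `-κ - 1 = -(N - 1)/(p - 1)`.
-/

open Set

theorem ConvexOn.le_sub_of_hasFDerivAt {E : Type*} [NormedAddCommGroup E] [NormedSpace ℝ E]
    {f : E → ℝ} (hf : ConvexOn ℝ univ f) {x : E} {φ : E →L[ℝ] ℝ} (hφ : HasFDerivAt f φ x)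
    (v : E) : φ v ≤ f (x + v) - f x := by
  set ℓ : ℝ →ᵃ[ℝ] E := AffineMap.lineMap x (x + v)
  have hline : ConvexOn ℝ univ (f ∘ ℓ) := hf.comp_affineMap ℓ
  have hderiv : HasDerivAt (f ∘ ℓ) (φ v) 0 := by
    simpa using hφ.comp_hasDerivAt_of_eq (0 : ℝ)
      (AffineMap.hasDerivAt_lineMap (a := x) (b := x + v)) (by simp)
  simpa [ℓ, slope_def_field] using
    hline.le_slope_of_hasDerivAt (mem_univ 0) (mem_univ 1) one_pos hderiv

theorem HasGradientAt.rpow_const {E : Type*} [NormedAddCommGroup E] [InnerProductSpace ℝ E]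
    [CompleteSpace E] {f : E → ℝ} {g x : E} {r : ℝ} (hf : HasGradientAt f g x) (hx : f x ≠ 0) :
    HasGradientAt (fun y => f y ^ r) ((r * f x ^ (r - 1)) • g) x := by
  rw [hasGradientAt_iff_hasFDerivAt, map_smul]
  exact (hasGradientAt_iff_hasFDerivAt.mp hf).rpow_const (Or.inl hx)

namespace Seminorm

variable {E : Type*} [NormedAddCommGroup E] [NormedSpace ℝ E]

theorem le_of_hasFDerivAt (p : Seminorm ℝ E) {x : E} {φ : E →L[ℝ] ℝ}
    (hφ : HasFDerivAt p φ x) (v : E) : φ v ≤ p v := by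
  linarith [p.convexOn.le_sub_of_hasFDerivAt hφ v, map_add_le_add p x v]

/-- Euler's identity, from the convexity inequality at `v = x` and `v = -x`. -/
theorem hasFDerivAt_apply_self (p : Seminorm ℝ E) {x : E} {φ : E →L[ℝ] ℝ}
    (hφ : HasFDerivAt p φ x) : φ x = p x := by
  have h_two : φ x ≤ p (x + x) - p x := p.convexOn.le_sub_of_hasFDerivAt hφ x
  have h_zero : φ (-x) ≤ p (x + -x) - p x := p.convexOn.le_sub_of_hasFDerivAt hφ (-x)
  rw [← two_smul ℝ x, map_smul_eq_mul] at h_two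
  rw [add_neg_cancel, map_zero, map_neg] at h_zero
  norm_num at h_two
  linarith

variable [FiniteDimensional ℝ E]

theorem continuous_of_finiteDimensional (p : Seminorm ℝ E) : Continuous p :=
  p.convexOn.locallyLipschitz.continuous

theorem exists_pos_mul_norm_le (p : Seminorm ℝ E) (hp : ∀ x, x ≠ 0 → 0 < p x) :
    ∃ c > 0, ∀ x, c * ‖x‖ ≤ p x := by
  obtain ⟨c, hc, hsphere⟩ := (isCompact_sphere (0 : E) 1).exists_forall_le'
    p.continuous_of_finiteDimensional.continuousOn
    fun y hy => hp y (ne_zero_of_mem_unit_sphere ⟨y, hy⟩)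
  refine ⟨c, hc, fun x => ?_⟩
  rcases eq_or_ne x 0 with rfl | hx
  · simp
  have hx_unit : (‖x‖⁻¹ : ℝ) • x ∈ Metric.sphere (0 : E) 1 := by
    simpa using norm_smul_inv_norm (𝕜 := ℝ) hx
  have := hsphere _ hx_unit
  rw [map_smul_eq_mul, norm_inv, norm_norm] at this
  have hxpos : 0 < ‖x‖ := norm_pos_iff.mpr hx
  rwa [le_inv_mul_iff₀ hxpos, mul_comm] at this

end Seminorm

section Polar

variable {N : ℕ} (p : Seminorm ℝ (EuclideanSpace ℝ (Fin N)))

theorem polar_le {ξ : EuclideanSpace ℝ (Fin N)} {M : ℝ} (h : ∀ y, p y ≤ 1 → ⟪ξ, y⟫ ≤ M) :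
    polar p ξ ≤ M :=
  csSup_le ⟨_, 0, by simp, rfl⟩ (forall_mem_image.mpr h)

theorem polar_zero : polar p 0 = 0 := by
  simp only [polar, inner_zero_left]
  rw [(show {y | p y ≤ 1}.Nonempty from ⟨0, by simp⟩).image_const, csSup_singleton]

variable {p}

theorem polar_bddAbove (hp : ∀ x, x ≠ 0 → 0 < p x) (ξ : EuclideanSpace ℝ (Fin N)) :
    BddAbove ((fun y => ⟪ξ, y⟫) '' {y | p y ≤ 1}) := by
  obtain ⟨c, hc, hbound⟩ := p.exists_pos_mul_norm_le hp
  refine ⟨‖ξ‖ * c⁻¹, forall_mem_image.mpr fun y (hy : p y ≤ 1) => ?_⟩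
  have hy_norm : ‖y‖ ≤ c⁻¹ := by
    rw [← one_div, le_div_iff₀ hc]
    linarith [hbound y, mul_comm c ‖y‖]
  exact (real_inner_le_norm ξ y).trans (mul_le_mul_of_nonneg_left hy_norm (norm_nonneg ξ))

theorem inner_le_polar (hp : ∀ x, x ≠ 0 → 0 < p x) {ξ y : EuclideanSpace ℝ (Fin N)}
    (hy : p y ≤ 1) : ⟪ξ, y⟫ ≤ polar p ξ :=
  le_csSup (polar_bddAbove hp ξ) ⟨y, hy, rfl⟩

theorem polar_add_le (hp : ∀ x, x ≠ 0 → 0 < p x) (ξ η : EuclideanSpace ℝ (Fin N)) :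
    polar p (ξ + η) ≤ polar p ξ + polar p η :=
  polar_le p fun y hy => by
    rw [inner_add_left]
    exact add_le_add (inner_le_polar hp hy) (inner_le_polar hp hy)

theorem polar_smul_le (hp : ∀ x, x ≠ 0 → 0 < p x) (a : ℝ) (ξ : EuclideanSpace ℝ (Fin N)) :
    polar p (a • ξ) ≤ ‖a‖ * polar p ξ :=
  polar_le p fun y hy => by
    rw [real_inner_smul_left, Real.norm_eq_abs]
    rcases le_or_gt 0 a with ha | ha
    · rw [abs_of_nonneg ha]
      exact mul_le_mul_of_nonneg_left (inner_le_polar hp hy) ha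
    · have h_neg := inner_le_polar (ξ := ξ) hp (y := -y) (by rwa [map_neg_eq_map])
      rw [inner_neg_right] at h_neg
      rw [abs_of_neg ha]
      nlinarith

variable (p) in
noncomputable def polarSeminorm (hp : ∀ x, x ≠ 0 → 0 < p x) :
    Seminorm ℝ (EuclideanSpace ℝ (Fin N)) :=
  Seminorm.ofSMulLE (polar p) (polar_zero p) (polar_add_le hp) (polar_smul_le hp)

theorem polar_smul (hp : ∀ x, x ≠ 0 → 0 < p x) (a : ℝ) (ξ : EuclideanSpace ℝ (Fin N)) :
    polar p (a • ξ) = |a| * polar p ξ :=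
  map_smul_eq_mul (polarSeminorm p hp) a ξ

theorem inner_le_polar_mul (hp : ∀ x, x ≠ 0 → 0 < p x) (ξ w : EuclideanSpace ℝ (Fin N)) :
    ⟪ξ, w⟫ ≤ polar p ξ * p w := by
  rcases eq_or_ne w 0 with rfl | hw
  · simp
  have hpw := hp w hw
  have h := inner_le_polar (ξ := ξ) hp (y := (p w)⁻¹ • w)
    (by rw [map_smul_eq_mul, norm_inv, Real.norm_of_nonneg hpw.le, inv_mul_cancel₀ hpw.ne'])
  rwa [real_inner_smul_right, inv_mul_le_iff₀ hpw, mul_comm] at h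

theorem polar_pos (hp : ∀ x, x ≠ 0 → 0 < p x) {x : EuclideanSpace ℝ (Fin N)} (hx : x ≠ 0) :
    0 < polar p x := by
  have h := inner_le_polar_mul hp x x
  rw [real_inner_self_eq_norm_sq] at h
  exact pos_of_mul_pos_left (h.trans_lt' (by positivity)) (hp x hx).le

theorem polar_neg_inv_polar_smul_self (hp : ∀ x, x ≠ 0 → 0 < p x)
    {x : EuclideanSpace ℝ (Fin N)} (hx : x ≠ 0) : polar p (-((polar p x)⁻¹ • x)) = 1 := by
  have hpx := polar_pos hp hx
  rw [← neg_smul, polar_smul hp, abs_neg, abs_inv, abs_of_pos hpx, inv_mul_cancel₀ hpx.ne']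

/-- Bipolar theorem, via Hahn–Banach separation from the closed convex unit ball of `p`. -/
theorem le_one_of_inner_le_polar {z : EuclideanSpace ℝ (Fin N)}
    (h : ∀ v, ⟪z, v⟫ ≤ polar p v) : p z ≤ 1 := by
  by_contra! hz
  have hz_ball : z ∉ p.closedBall 0 1 := by
    rw [Seminorm.mem_closedBall_zero]; exact hz.not_ge
  have h_closed : IsClosed (p.closedBall 0 1) := by
    simpa only [Seminorm.closedBall_zero_eq] using
      isClosed_le p.continuous_of_finiteDimensional continuous_const
  obtain ⟨f, c, hf_ball, hf_z⟩ :=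
    geometric_hahn_banach_closed_point (Seminorm.convex_closedBall p 0 1) h_closed hz_ball
  set v := (InnerProductSpace.toDual ℝ _).symm f
  have hv : ∀ w, ⟪v, w⟫ = f w := fun w => InnerProductSpace.toDual_symm_apply
  have h_polar : polar p v ≤ c := polar_le p fun y hy => by
    rw [hv]; exact (hf_ball y (Seminorm.mem_closedBall_zero p |>.mpr hy)).le
  linarith [h v, real_inner_comm z v, hv z]

end Polar

section Gradient

variable {N : ℕ} {p : Seminorm ℝ (EuclideanSpace ℝ (Fin N))}

theorem inner_gradient_polar_le (hp : ∀ x, x ≠ 0 → 0 < p x) {x : EuclideanSpace ℝ (Fin N)}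
    (hd : DifferentiableAt ℝ (polar p) x) (v : EuclideanSpace ℝ (Fin N)) :
    ⟪gradient (polar p) x, v⟫ ≤ polar p v := by
  rw [inner_gradient_left]
  exact (polarSeminorm p hp).le_of_hasFDerivAt hd.hasFDerivAt v

theorem inner_gradient_polar_self (hp : ∀ x, x ≠ 0 → 0 < p x) {x : EuclideanSpace ℝ (Fin N)}
    (hd : DifferentiableAt ℝ (polar p) x) : ⟪gradient (polar p) x, x⟫ = polar p x := by
  rw [inner_gradient_left]
  exact (polarSeminorm p hp).hasFDerivAt_apply_self hd.hasFDerivAt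

theorem apply_gradient_polar (hp : ∀ x, x ≠ 0 → 0 < p x) {x : EuclideanSpace ℝ (Fin N)}
    (hx : x ≠ 0) (hd : DifferentiableAt ℝ (polar p) x) : p (gradient (polar p) x) = 1 := by
  refine le_antisymm (le_one_of_inner_le_polar (inner_gradient_polar_le hp hd)) ?_
  have h := inner_le_polar_mul hp x (gradient (polar p) x)
  rw [real_inner_comm, inner_gradient_polar_self hp hd] at h
  exact (le_mul_iff_one_le_right (polar_pos hp hx)).mp h

theorem add_inner_sub_le_of_polar_eq_one (hp : ∀ x, x ≠ 0 → 0 < p x)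
    {ζ ξ : EuclideanSpace ℝ (Fin N)} (hζ : polar p ζ = 1) (hξ : ⟪ζ, ξ⟫ = p ξ)
    (w : EuclideanSpace ℝ (Fin N)) : p ξ + ⟪ζ, w - ξ⟫ ≤ p w := by
  have h := inner_le_polar_mul hp ζ w
  rw [hζ, one_mul] at h
  rw [inner_sub_right, hξ]
  linarith

end Gradient

theorem mul_rpow_neg_sub_one_div_rpow_mul_inv {κ s q M : ℝ} (hκ : 0 ≤ κ) (hs : 0 < s)
    (hq : q ≠ 0) :
    (κ * s ^ (-((M - 1) / q))) ^ q * s⁻¹ = κ ^ q * s ^ (-M) := by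
  rw [Real.mul_rpow hκ (by positivity), ← Real.rpow_mul hs.le, mul_assoc, ← Real.rpow_neg_one s,
    ← Real.rpow_add hs]
  congr 2
  field_simp
  ring

/-- The explicit barrier `u(x) = F°(x)^{−κ}`, `κ = (N−p)/(p−1)`, for the
anisotropic `p`-Laplace problem: pointwise formulas for its gradient, for
`F(∇u)`, a subgradient of `F` at `∇u`, and the identification of the flux
field `F^{p−1}(∇u) ∂F(∇u)` with the divergence-free field `−κ^{p−1} F°(y)^{−N} y`. -/
theorem p_capacitary_barrier {N : ℕ}
    (F : EuclideanSpace ℝ (Fin N) → ℝ)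
    (hF_add : ∀ x y, F (x + y) ≤ F x + F y)
    (hF_smul : ∀ (a : ℝ) x, F (a • x) = |a| * F x)
    (hF_pos : ∀ x, x ≠ 0 → 0 < F x)
    (p : ℝ) (hp : 1 < p) (hpN : p < N)
    (κ : ℝ) (hκ : κ = ((N : ℝ) - p) / (p - 1))
    (u : EuclideanSpace ℝ (Fin N) → ℝ)
    (hu : ∀ x, u x = polar F x ^ (-κ)) :
    ∀ x : EuclideanSpace ℝ (Fin N), x ≠ 0 → DifferentiableAt ℝ (polar F) x →
      -- (i) differentiability of u and formula for its gradient
      (DifferentiableAt ℝ u x ∧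
        gradient u x = (-κ * polar F x ^ (-κ - 1)) • gradient (polar F) x) ∧
      -- (ii) F(∇u(x)) = κ F°(x)^{−(N−1)/(p−1)}
      F (gradient u x) = κ * polar F x ^ (-(((N : ℝ) - 1) / (p - 1))) ∧
      -- (iii) −x/F°(x) is a subgradient of F at ∇u(x)
      (∀ w : EuclideanSpace ℝ (Fin N),
        F (gradient u x) + ⟪-((polar F x)⁻¹ • x), w - gradient u x⟫ ≤ F w) ∧
      -- (iv) the flux field F^{p−1}(∇u) ∂F(∇u) equals −κ^{p−1} F°(x)^{−N} x
      (F (gradient u x) ^ (p - 1)) • (-((polar F x)⁻¹ • x))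
        = (-(κ ^ (p - 1))) • ((polar F x ^ (-(N : ℝ))) • x) := by
  intro x hx hd
  have hκ_pos : 0 < κ := hκ ▸ div_pos (by linarith) (by linarith)
  have hp1 : p - 1 ≠ 0 := by linarith
  have hexp : -κ - 1 = -(((N : ℝ) - 1) / (p - 1)) := by
    rw [hκ]; field_simp; ring
  let G : Seminorm ℝ (EuclideanSpace ℝ (Fin N)) := Seminorm.of F hF_add hF_smul
  have hG : ∀ y, y ≠ 0 → 0 < G y := hF_pos
  set s := polar F x
  set z := gradient (polar F) x
  have hs : 0 < s := polar_pos hG hx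
  have hFz : F z = 1 := apply_gradient_polar hG hx hd
  have hzx : ⟪z, x⟫ = s := inner_gradient_polar_self hG hd
  have hgrad : HasGradientAt u ((-κ * s ^ (-κ - 1)) • z) x := by
    simpa [funext hu] using hd.hasGradientAt.rpow_const (r := -κ) hs.ne'
  have hFgrad : F (gradient u x) = κ * s ^ (-κ - 1) := by
    rw [hgrad.gradient, hF_smul, hFz, mul_one, neg_mul, abs_neg, abs_of_pos (by positivity)]
  refine ⟨⟨hgrad.differentiableAt, hgrad.gradient⟩, hFgrad.trans (by rw [hexp]), fun w => ?_, ?_⟩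
  · refine add_inner_sub_le_of_polar_eq_one (p := G) hG ?_ ?_ w
    · exact polar_neg_inv_polar_smul_self hG hx
    · change _ = F _
      rw [hFgrad, hgrad.gradient, inner_neg_left, real_inner_smul_left, real_inner_smul_right,
        real_inner_comm, hzx]
      field_simp
  · rw [hFgrad, hexp, smul_neg, smul_smul,
      mul_rpow_neg_sub_one_div_rpow_mul_inv hκ_pos.le hs hp1, neg_smul, smul_smul]
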